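/- Let a, b ∈ ℝ with b ≠ 0 and define φ(ξ) = b ξ⁴ + a ξ² for ξ ∈ ℝ. Then there is a constant C > 0, independent of a and b, such that the oscillatory integral I_φ(x) = ∫_ℝ exp(i φ(ξ) + i x ξ) dξ satisfies |I_φ(x)| ≤ C |b|^{-1/4} for all x ∈ ℝ. -/

import Mathlib

/-!
Van der Corput's lemma: if `μ ^ k ≤ |f⁽ᵏ⁾|` on an interval, then
`|∫ exp (i f)| ≤ (3 * 2 ^ k - 2) / μ` there. For `k = 1` with `f'` monotone this is integration by
parts. For `k ≥ 2`, `f⁽ᵏ⁻¹⁾` grows at rate `μ ^ k`, so `|f⁽ᵏ⁻¹⁾| ≥ μ ^ (k - 1)` off an interval of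
length `2 / μ`, and induction applies to the at most two remaining pieces.

For `φ(ξ) = b ξ⁴ + a ξ² + x ξ` the fourth derivative is the constant `24 b`, which bounds every
`∫_{-R}^{R} exp (i φ)` by `46 |b| ^ (-1/4)`, independently of `R`, `a` and `x`. The third derivative
`24 b ξ` is at least `24 |b| R` in absolute value on `|ξ| ≥ R`, so the tails are `O(R ^ (-1/3))` and
the symmetric integrals converge.
-/

open MeasureTheory Filter Set
open scoped ENNReal Topology

noncomputable section

open Complex intervalIntegral

namespace OscillatoryIntegral

variable {u v : ℝ}

theorem forall_le_or_forall_le_neg_of_le_abs {g : ℝ → ℝ} {m : ℝ}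
    (hg : ContinuousOn g (Icc u v)) (hm : 0 < m) (hlow : ∀ ξ ∈ Icc u v, m ≤ |g ξ|) :
    (∀ ξ ∈ Icc u v, m ≤ g ξ) ∨ ∀ ξ ∈ Icc u v, g ξ ≤ -m := by
  rcases isPreconnected_Icc.eq_or_eq_neg_of_sq_eq hg hg.abs (fun ξ _ => by simp)
    (fun hξ => (hm.trans_le (hlow _ hξ)).ne') with h | h
  · exact Or.inl fun ξ hξ => h hξ ▸ hlow ξ hξ
  · exact Or.inr fun ξ hξ => by rw [h hξ, Pi.neg_apply, neg_le_neg_iff]; exact hlow ξ hξ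

/-- The point `c` is a zero of `g` if there is one, otherwise an endpoint. -/
theorem exists_forall_mul_abs_sub_le_abs {g : ℝ → ℝ} {m : ℝ} (huv : u ≤ v)
    (hg : ContinuousOn g (Icc u v))
    (hgrow : ∀ ξ ∈ Icc u v, ∀ η ∈ Icc u v, ξ ≤ η → m * (η - ξ) ≤ g η - g ξ) :
    ∃ c, ∀ ξ ∈ Icc u v, m * |ξ - c| ≤ |g ξ| := by
  by_cases hu : 0 ≤ g u
  · refine ⟨u, fun ξ hξ => ?_⟩
    have := hgrow u (left_mem_Icc.2 huv) ξ hξ hξ.1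
    rw [abs_of_nonneg (sub_nonneg.2 hξ.1)]
    linarith [le_abs_self (g ξ)]
  by_cases hv : g v ≤ 0
  · refine ⟨v, fun ξ hξ => ?_⟩
    have := hgrow ξ hξ v (right_mem_Icc.2 huv) hξ.2
    rw [abs_sub_comm, abs_of_nonneg (sub_nonneg.2 hξ.2)]
    linarith [neg_abs_le (g ξ)]
  obtain ⟨c, hc, hc0⟩ := intermediate_value_Icc huv hg ⟨(not_le.1 hu).le, (not_le.1 hv).le⟩
  refine ⟨c, fun ξ hξ => ?_⟩
  rcases le_total ξ c with h | h
  · have := hgrow ξ hξ c hc h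
    rw [abs_sub_comm, abs_of_nonneg (sub_nonneg.2 h)]
    linarith [neg_abs_le (g ξ)]
  · have := hgrow c hc ξ hξ h
    rw [abs_of_nonneg (sub_nonneg.2 h)]
    linarith [le_abs_self (g ξ)]

theorem exists_forall_mul_abs_sub_le_abs_of_le_abs_deriv {g g' : ℝ → ℝ} {m : ℝ} (huv : u ≤ v)
    (hg : ∀ ξ ∈ Icc u v, HasDerivAt g (g' ξ) ξ) (hg' : ContinuousOn g' (Icc u v)) (hm : 0 < m)
    (hlow : ∀ ξ ∈ Icc u v, m ≤ |g' ξ|) :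
    ∃ c, ∀ ξ ∈ Icc u v, m * |ξ - c| ≤ |g ξ| := by
  have hcont : ContinuousOn g (Icc u v) := fun ξ hξ => (hg ξ hξ).continuousAt.continuousWithinAt
  have hdiff : DifferentiableOn ℝ g (interior (Icc u v)) := fun ξ hξ =>
    (hg ξ (interior_subset hξ)).differentiableAt.differentiableWithinAt
  have hderiv : ∀ ξ ∈ interior (Icc u v), deriv g ξ = g' ξ := fun ξ hξ =>
    (hg ξ (interior_subset hξ)).deriv
  rcases forall_le_or_forall_le_neg_of_le_abs hg' hm hlow with hpos | hneg
  · exact exists_forall_mul_abs_sub_le_abs huv hcont <|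
      (convex_Icc u v).mul_sub_le_image_sub_of_le_deriv hcont hdiff fun ξ hξ =>
        (hderiv ξ hξ).symm ▸ hpos ξ (interior_subset hξ)
  · have hdecr := (convex_Icc u v).image_sub_le_mul_sub_of_deriv_le hcont hdiff fun ξ hξ =>
        (hderiv ξ hξ).symm ▸ hneg ξ (interior_subset hξ)
    obtain ⟨c, hc⟩ := exists_forall_mul_abs_sub_le_abs (g := -g) huv hcont.neg
      fun ξ hξ η hη hξη => by simp only [Pi.neg_apply]; linarith [hdecr ξ hξ η hη hξη]
    exact ⟨c, fun ξ hξ => by simpa using hc ξ hξ⟩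


theorem norm_integral_le_of_forall_le_abs_sub {E : Type*} [NormedAddCommGroup E] [NormedSpace ℝ E]
    {F : ℝ → E} {c r B : ℝ} (huv : u ≤ v) (hF : Continuous F) (hF1 : ∀ ξ, ‖F ξ‖ ≤ 1)
    (hr : 0 ≤ r) (hB : 0 ≤ B)
    (hfar : ∀ p q, u ≤ p → p ≤ q → q ≤ v → (∀ ξ ∈ Icc p q, r ≤ |ξ - c|) →
      ‖∫ ξ in p..q, F ξ‖ ≤ B) :
    ‖∫ ξ in u..v, F ξ‖ ≤ 2 * B + 2 * r := by
  set p := max u (min v (c - r))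
  set q := min v (max u (c + r))
  have hup : u ≤ p := le_max_left _ _
  have hpv : p ≤ v := max_le huv (min_le_left _ _)
  have huq : u ≤ q := le_min huv (le_max_left _ _)
  have hqv : q ≤ v := min_le_left _ _
  have hleft : ‖∫ ξ in u..p, F ξ‖ ≤ B := by
    rcases le_or_gt (c - r) u with h | h
    · rw [show p = u from max_eq_left ((min_le_right _ _).trans h), integral_same, norm_zero]
      exact hB
    refine hfar u p le_rfl hup hpv fun ξ hξ => ?_
    have : p ≤ c - r := max_le h.le (min_le_right _ _)
    exact le_abs.2 (Or.inr (by linarith [hξ.2]))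
  have hright : ‖∫ ξ in q..v, F ξ‖ ≤ B := by
    rcases le_or_gt v (c + r) with h | h
    · rw [show q = v from min_eq_left (h.trans (le_max_right _ _)), integral_same, norm_zero]
      exact hB
    refine hfar q v huq hqv le_rfl fun ξ hξ => ?_
    have : c + r ≤ q := le_min h.le (le_max_right _ _)
    exact le_abs.2 (Or.inl (by linarith [hξ.1]))
  have hmiddle : ‖∫ ξ in p..q, F ξ‖ ≤ 2 * r := by
    have hpq : |q - p| ≤ 2 * r := by
      rw [abs_le]
      constructor <;> simp only [p, q, max_def, min_def] <;> split_ifs <;> linarith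
    calc ‖∫ ξ in p..q, F ξ‖ ≤ 1 * |q - p| := norm_integral_le_of_norm_le_const fun ξ _ => hF1 ξ
      _ ≤ 2 * r := by rw [one_mul]; exact hpq
  have hint : ∀ s t, IntervalIntegrable F volume s t := fun s t => hF.intervalIntegrable s t
  rw [← integral_add_adjacent_intervals (hint u p) (hint p v),
    ← integral_add_adjacent_intervals (hint p q) (hint q v)]
  calc ‖(∫ ξ in u..p, F ξ) + ((∫ ξ in p..q, F ξ) + ∫ ξ in q..v, F ξ)‖
      ≤ ‖∫ ξ in u..p, F ξ‖ + (‖∫ ξ in p..q, F ξ‖ + ‖∫ ξ in q..v, F ξ‖) :=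
        (norm_add_le _ _).trans (add_le_add_right (norm_add_le _ _) _)
    _ ≤ 2 * B + 2 * r := by linarith

theorem integral_abs_eq_abs_sub_of_hasDerivAt {G G' : ℝ → ℝ} (huv : u ≤ v)
    (hG : ∀ ξ ∈ Icc u v, HasDerivAt G (G' ξ) ξ) (hG' : IntervalIntegrable G' volume u v)
    (hsign : (∀ ξ ∈ Icc u v, 0 ≤ G' ξ) ∨ ∀ ξ ∈ Icc u v, G' ξ ≤ 0) :
    ∫ ξ in u..v, |G' ξ| = |G v - G u| := by
  have hFTC := integral_eq_sub_of_hasDerivAt (uIcc_of_le huv ▸ hG) hG'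
  rcases hsign with h | h
  · rw [integral_congr fun ξ hξ => abs_of_nonneg (h ξ (uIcc_of_le huv ▸ hξ)), hFTC,
      abs_of_nonneg (hFTC ▸ integral_nonneg huv h)]
  · have hneg : 0 ≤ ∫ ξ in u..v, -G' ξ := integral_nonneg huv fun ξ hξ => neg_nonneg.2 (h ξ hξ)
    rw [intervalIntegral.integral_neg, hFTC] at hneg
    rw [integral_congr fun ξ hξ => abs_of_nonpos (h ξ (uIcc_of_le huv ▸ hξ)),
      intervalIntegral.integral_neg, hFTC, abs_of_nonpos (neg_nonneg.1 hneg)]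

theorem norm_integral_mul_deriv_le {A : Type*} [NormedRing A] [NormedAlgebra ℝ A] [CompleteSpace A]
    {h h' e e' : ℝ → A} (huv : u ≤ v) (hh : ∀ ξ ∈ Icc u v, HasDerivAt h (h' ξ) ξ)
    (he : ∀ ξ ∈ Icc u v, HasDerivAt e (e' ξ) ξ) (hh' : IntervalIntegrable h' volume u v)
    (he' : IntervalIntegrable e' volume u v) (he1 : ∀ ξ ∈ Icc u v, ‖e ξ‖ ≤ 1) :
    ‖∫ ξ in u..v, h ξ * e' ξ‖ ≤ ‖h u‖ + ‖h v‖ + ∫ ξ in u..v, ‖h' ξ‖ := by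
  rw [integral_mul_deriv_eq_deriv_mul (uIcc_of_le huv ▸ hh) (uIcc_of_le huv ▸ he) hh' he']
  have hmul : ∀ f : ℝ → A, ∀ ξ ∈ Icc u v, ‖f ξ * e ξ‖ ≤ ‖f ξ‖ := fun f ξ hξ =>
    (norm_mul_le _ _).trans (mul_le_of_le_one_right (norm_nonneg _) (he1 ξ hξ))
  have hrest : ‖∫ ξ in u..v, h' ξ * e ξ‖ ≤ ∫ ξ in u..v, ‖h' ξ‖ :=
    norm_integral_le_of_norm_le huv
      (ae_of_all _ fun ξ hξ => hmul h' ξ (Ioc_subset_Icc_self hξ)) hh'.norm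
  calc ‖h v * e v - h u * e u - ∫ ξ in u..v, h' ξ * e ξ‖
      ≤ ‖h v * e v‖ + ‖h u * e u‖ + ‖∫ ξ in u..v, h' ξ * e ξ‖ :=
        (norm_sub_le _ _).trans (add_le_add_left (norm_sub_le _ _) _)
    _ ≤ ‖h u‖ + ‖h v‖ + ∫ ξ in u..v, ‖h' ξ‖ := by
      linarith [hmul h u (left_mem_Icc.2 huv), hmul h v (right_mem_Icc.2 huv)]

theorem hasDerivAt_iteratedDeriv {f : ℝ → ℝ} {k : ℕ} (hf : ContDiff ℝ (k + 1) f) (ξ : ℝ) :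
    HasDerivAt (iteratedDeriv k f) (iteratedDeriv (k + 1) f ξ) ξ := by
  rw [iteratedDeriv_succ]
  exact (hf.differentiable_iteratedDeriv k (by norm_cast; omega) ξ).hasDerivAt

/-- Integration by parts, with `exp (i f) = (i f')⁻¹ * (exp (i f))'`. -/
theorem norm_integral_exp_le_of_hasDerivAt_inv {f f' G' : ℝ → ℝ} (huv : u ≤ v)
    (hf : ∀ ξ ∈ Icc u v, HasDerivAt f (f' ξ) ξ) (hf' : ContinuousOn f' (Icc u v))
    (hne : ∀ ξ ∈ Icc u v, f' ξ ≠ 0) (hG : ∀ ξ ∈ Icc u v, HasDerivAt (fun ξ => (f' ξ)⁻¹) (G' ξ) ξ)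
    (hG' : IntervalIntegrable G' volume u v) :
    ‖∫ ξ in u..v, exp (I * f ξ)‖ ≤ |(f' u)⁻¹| + |(f' v)⁻¹| + ∫ ξ in u..v, |G' ξ| := by
  set e : ℝ → ℂ := fun ξ => exp (I * f ξ)
  have he : ∀ ξ ∈ Icc u v, HasDerivAt e (e ξ * (I * f' ξ)) ξ := fun ξ hξ =>
    ((hf ξ hξ).ofReal_comp.const_mul I).cexp
  set h : ℝ → ℂ := fun ξ => -I * ((f' ξ)⁻¹ : ℝ)
  have hh : ∀ ξ ∈ Icc u v, HasDerivAt h (-I * G' ξ) ξ := fun ξ hξ =>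
    (hG ξ hξ).ofReal_comp.const_mul (-I)
  have heq : ∀ ξ ∈ uIcc u v, e ξ = h ξ * (e ξ * (I * f' ξ)) := fun ξ hξ => by
    have : ((f' ξ : ℝ) : ℂ) ≠ 0 := ofReal_ne_zero.2 (hne ξ (uIcc_of_le huv ▸ hξ))
    simp only [h]
    push_cast
    field_simp
    ring_nf
    simp [I_sq]
  have he' : ContinuousOn (fun ξ => e ξ * (I * f' ξ)) (Icc u v) :=
    (continuousOn_of_forall_continuousAt fun ξ hξ => (he ξ hξ).continuousAt).mul
      (continuousOn_const.mul (continuous_ofReal.comp_continuousOn hf'))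
  calc ‖∫ ξ in u..v, e ξ‖ = ‖∫ ξ in u..v, h ξ * (e ξ * (I * f' ξ))‖ := by
        rw [integral_congr heq]
    _ ≤ ‖h u‖ + ‖h v‖ + ∫ ξ in u..v, ‖-I * G' ξ‖ :=
        norm_integral_mul_deriv_le huv hh he
          ((show IntervalIntegrable (fun ξ => (G' ξ : ℂ)) volume u v from
            ⟨hG'.1.ofReal, hG'.2.ofReal⟩).const_mul (-I))
          (he'.intervalIntegrable_of_Icc huv) fun ξ _ => (norm_exp_I_mul_ofReal _).le
    _ = |(f' u)⁻¹| + |(f' v)⁻¹| + ∫ ξ in u..v, |G' ξ| := by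
        simp only [h, norm_mul, norm_neg, norm_I, one_mul, norm_real, Real.norm_eq_abs]

theorem norm_integral_exp_le_of_le_abs_deriv {f : ℝ → ℝ} {m : ℝ} (huv : u ≤ v)
    (hf : ContDiff ℝ 2 f) (hm : 0 < m)
    (hsign : (∀ ξ ∈ Icc u v, 0 ≤ iteratedDeriv 2 f ξ) ∨ ∀ ξ ∈ Icc u v, iteratedDeriv 2 f ξ ≤ 0)
    (hlow : ∀ ξ ∈ Icc u v, m ≤ |deriv f ξ|) :
    ‖∫ ξ in u..v, exp (I * f ξ)‖ ≤ 4 / m := by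
  have hf'' (ξ : ℝ) : HasDerivAt (deriv f) (iteratedDeriv 2 f ξ) ξ := by
    simpa only [iteratedDeriv_one] using hasDerivAt_iteratedDeriv (k := 1) hf ξ
  have hcont : Continuous (deriv f) := hf.continuous_deriv (by norm_num)
  have hne : ∀ ξ ∈ Icc u v, deriv f ξ ≠ 0 := fun ξ hξ h =>
    by linarith [hlow ξ hξ, h ▸ abs_zero (α := ℝ)]
  have hinv : ∀ ξ ∈ Icc u v, |(deriv f ξ)⁻¹| ≤ 1 / m := fun ξ hξ => by
    rw [abs_inv, one_div]; exact inv_anti₀ hm (hlow ξ hξ)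
  set G' : ℝ → ℝ := fun ξ => -iteratedDeriv 2 f ξ / deriv f ξ ^ 2
  have hG : ∀ ξ ∈ Icc u v, HasDerivAt (fun ξ => (deriv f ξ)⁻¹) (G' ξ) ξ := fun ξ hξ =>
    (hf'' ξ).inv (hne ξ hξ)
  have hG' : ContinuousOn G' (Icc u v) :=
    (hf.continuous_iteratedDeriv 2 le_rfl).neg.continuousOn.div (hcont.continuousOn.pow 2)
      fun ξ hξ => pow_ne_zero 2 (hne ξ hξ)
  have hsign' : (∀ ξ ∈ Icc u v, 0 ≤ G' ξ) ∨ ∀ ξ ∈ Icc u v, G' ξ ≤ 0 :=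
    hsign.symm.imp (fun h ξ hξ => div_nonneg (neg_nonneg.2 (h ξ hξ)) (sq_nonneg _))
      (fun h ξ hξ => div_nonpos_of_nonpos_of_nonneg (neg_nonpos.2 (h ξ hξ)) (sq_nonneg _))
  calc ‖∫ ξ in u..v, exp (I * f ξ)‖
      ≤ |(deriv f u)⁻¹| + |(deriv f v)⁻¹| + ∫ ξ in u..v, |G' ξ| :=
        norm_integral_exp_le_of_hasDerivAt_inv huv
          (fun ξ _ => (hf.differentiable (by norm_num) ξ).hasDerivAt) hcont.continuousOn hne hG
          (hG'.intervalIntegrable_of_Icc huv)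
    _ = |(deriv f u)⁻¹| + |(deriv f v)⁻¹| + |(deriv f v)⁻¹ - (deriv f u)⁻¹| := by
        rw [integral_abs_eq_abs_sub_of_hasDerivAt huv hG (hG'.intervalIntegrable_of_Icc huv) hsign']
    _ ≤ 4 / m := by
        rw [show 4 / m = 4 * (1 / m) by ring]
        linarith [abs_sub (deriv f v)⁻¹ (deriv f u)⁻¹, hinv u (left_mem_Icc.2 huv),
          hinv v (right_mem_Icc.2 huv)]

theorem norm_integral_le_of_le_abs_deriv_of_forall_le_abs {E : Type*} [NormedAddCommGroup E]
    [NormedSpace ℝ E] {F : ℝ → E} {g g' : ℝ → ℝ} {m δ B : ℝ} (huv : u ≤ v) (hF : Continuous F)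
    (hF1 : ∀ ξ, ‖F ξ‖ ≤ 1) (hg : ∀ ξ ∈ Icc u v, HasDerivAt g (g' ξ) ξ)
    (hg' : ContinuousOn g' (Icc u v)) (hm : 0 < m) (hδ : 0 ≤ δ) (hB : 0 ≤ B)
    (hlow : ∀ ξ ∈ Icc u v, m ≤ |g' ξ|)
    (hbound : ∀ p q, u ≤ p → p ≤ q → q ≤ v → (∀ ξ ∈ Icc p q, δ ≤ |g ξ|) →
      ‖∫ ξ in p..q, F ξ‖ ≤ B) :
    ‖∫ ξ in u..v, F ξ‖ ≤ 2 * B + 2 * (δ / m) := by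
  obtain ⟨c, hc⟩ := exists_forall_mul_abs_sub_le_abs_of_le_abs_deriv huv hg hg' hm hlow
  refine norm_integral_le_of_forall_le_abs_sub (c := c) huv hF hF1 (div_nonneg hδ hm.le) hB
    fun p q hup hpq hqv hfar => hbound p q hup hpq hqv fun ξ hξ => ?_
  calc δ = m * (δ / m) := by field_simp
    _ ≤ m * |ξ - c| := mul_le_mul_of_nonneg_left (hfar ξ hξ) hm.le
    _ ≤ |g ξ| := hc ξ ⟨hup.trans hξ.1, hξ.2.trans hqv⟩

theorem norm_integral_exp_le_of_le_abs_iteratedDeriv {f : ℝ → ℝ} {k : ℕ} {μ : ℝ} (hk : 2 ≤ k)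
    (huv : u ≤ v) (hf : ContDiff ℝ k f) (hμ : 0 < μ)
    (hlow : ∀ ξ ∈ Icc u v, μ ^ k ≤ |iteratedDeriv k f ξ|) :
    ‖∫ ξ in u..v, exp (I * f ξ)‖ ≤ (3 * 2 ^ k - 2) / μ := by
  have hF : Continuous fun ξ => exp (I * f ξ) := by
    have := hf.continuous
    fun_prop
  have hF1 (ξ : ℝ) : ‖exp (I * f ξ)‖ ≤ 1 := (norm_exp_I_mul_ofReal _).le
  induction k, hk using Nat.le_induction generalizing u v with
  | base =>
    have hsign := forall_le_or_forall_le_neg_of_le_abs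
      (hf.continuous_iteratedDeriv 2 le_rfl).continuousOn (by positivity) hlow
    refine (norm_integral_le_of_le_abs_deriv_of_forall_le_abs (δ := μ) huv hF hF1
      (fun ξ _ => hasDerivAt_iteratedDeriv hf ξ) (hf.continuous_iteratedDeriv 2 le_rfl).continuousOn
      (by positivity) hμ.le (by positivity) hlow
      fun p q hup hpq hqv hδ => norm_integral_exp_le_of_le_abs_deriv hpq hf hμ ?_
        (by simpa only [iteratedDeriv_one] using hδ)).trans_eq ?_
    · exact hsign.imp
        (fun h ξ hξ => by linarith [h ξ ⟨hup.trans hξ.1, hξ.2.trans hqv⟩, sq_nonneg μ])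
        (fun h ξ hξ => by linarith [h ξ ⟨hup.trans hξ.1, hξ.2.trans hqv⟩, sq_nonneg μ])
    · field_simp
      ring
  | succ k hk ih =>
    refine (norm_integral_le_of_le_abs_deriv_of_forall_le_abs (δ := μ ^ k) huv hF hF1
      (fun ξ _ => hasDerivAt_iteratedDeriv hf ξ)
      (hf.continuous_iteratedDeriv (k + 1) le_rfl).continuousOn (by positivity) (by positivity)
      (div_nonneg (by linarith [one_le_pow₀ (n := k) (one_le_two (α := ℝ))]) hμ.le) hlow
      fun p q hup hpq hqv hδ => ih hpq (hf.of_le (by norm_cast; omega)) hδ).trans_eq ?_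
    field_simp
    ring

theorem exists_tendsto_integral_neg_of_forall_norm_integral_le {E : Type*}
    [NormedAddCommGroup E] [NormedSpace ℝ E] [CompleteSpace E] {F : ℝ → E} (hF : Continuous F)
    (htail : ∀ ε > 0, ∃ T, ∀ p q, T ≤ p → p ≤ q →
      ‖∫ ξ in p..q, F ξ‖ ≤ ε ∧ ‖∫ ξ in -q..-p, F ξ‖ ≤ ε) :
    ∃ L, Tendsto (fun R => ∫ ξ in -R..R, F ξ) atTop (𝓝 L) := by
  refine cauchySeq_tendsto_of_complete (Metric.cauchySeq_iff'.2 fun ε hε => ?_)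
  obtain ⟨T, hT⟩ := htail (ε / 3) (by positivity)
  refine ⟨T, fun R hR => ?_⟩
  have hint : ∀ s t, IntervalIntegrable F volume s t := fun s t => hF.intervalIntegrable s t
  have hsplit : (∫ ξ in -R..R, F ξ) - ∫ ξ in -T..T, F ξ
      = (∫ ξ in -R..-T, F ξ) + ∫ ξ in T..R, F ξ := by
    rw [← integral_add_adjacent_intervals (hint (-R) (-T)) (hint (-T) R),
      ← integral_add_adjacent_intervals (hint (-T) T) (hint T R)]
    abel
  obtain ⟨hright, hleft⟩ := hT T R le_rfl hR
  rw [dist_eq_norm, hsplit]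
  calc _ ≤ ‖∫ ξ in -R..-T, F ξ‖ + ‖∫ ξ in T..R, F ξ‖ := norm_add_le _ _
    _ < ε := by linarith

theorem iteratedDeriv_three_quartic (a b x : ℝ) :
    iteratedDeriv 3 (fun ξ : ℝ => b * ξ ^ 4 + a * ξ ^ 2 + x * ξ) = fun ξ => 24 * b * ξ := by
  have h1 : deriv (fun ξ : ℝ => b * ξ ^ 4 + a * ξ ^ 2 + x * ξ)
      = fun ξ => 4 * b * ξ ^ 3 + 2 * a * ξ + x := by
    ext ξ; simp (disch := fun_prop); ring
  have h2 : deriv (fun ξ : ℝ => 4 * b * ξ ^ 3 + 2 * a * ξ + x)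
      = fun ξ => 12 * b * ξ ^ 2 + 2 * a := by
    ext ξ; simp (disch := fun_prop); ring
  have h3 : deriv (fun ξ : ℝ => 12 * b * ξ ^ 2 + 2 * a) = fun ξ => 24 * b * ξ := by
    ext ξ; simp (disch := fun_prop); ring
  simp only [iteratedDeriv_succ, iteratedDeriv_zero, h1, h2, h3]

theorem iteratedDeriv_four_quartic (a b x : ℝ) :
    iteratedDeriv 4 (fun ξ : ℝ => b * ξ ^ 4 + a * ξ ^ 2 + x * ξ) = fun _ => 24 * b := by
  rw [iteratedDeriv_succ, iteratedDeriv_three_quartic]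
  ext ξ
  simp

theorem norm_integral_exp_quartic_tail (a x : ℝ) {b : ℝ} (hb : b ≠ 0) :
    ∀ ε > 0, ∃ T, ∀ p q, T ≤ p → p ≤ q →
      ‖∫ ξ in p..q, exp (I * ((b * ξ ^ 4 + a * ξ ^ 2 + x * ξ : ℝ) : ℂ))‖ ≤ ε ∧
      ‖∫ ξ in -q..-p, exp (I * ((b * ξ ^ 4 + a * ξ ^ 2 + x * ξ : ℝ) : ℂ))‖ ≤ ε := by
  intro ε hε
  have hb' : 0 < |b| := abs_pos.2 hb
  set μ := 22 / ε
  have hμ : 0 < μ := by positivity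
  refine ⟨μ ^ 3 / (24 * |b|), fun p q hp hpq => ?_⟩
  have hp' : μ ^ 3 ≤ 24 * |b| * p := by rwa [div_le_iff₀' (by positivity)] at hp
  have hbound : ∀ s t, s ≤ t → (∀ ξ ∈ Icc s t, p ≤ |ξ|) →
      ‖∫ ξ in s..t, exp (I * ((b * ξ ^ 4 + a * ξ ^ 2 + x * ξ : ℝ) : ℂ))‖ ≤ ε := by
    intro s t hst hfar
    refine (norm_integral_exp_le_of_le_abs_iteratedDeriv (k := 3) (by norm_num) hst (by fun_prop) hμ
      fun ξ hξ => ?_).trans_eq ?_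
    · rw [iteratedDeriv_three_quartic, abs_mul, abs_mul, abs_of_pos (by norm_num : (0:ℝ) < 24)]
      exact hp'.trans (mul_le_mul_of_nonneg_left (hfar ξ hξ) (by positivity))
    · simp only [μ]
      field_simp
      norm_num
  have hp0 : 0 ≤ p := le_trans (by positivity) hp
  refine ⟨hbound p q hpq fun ξ hξ => hξ.1.trans (le_abs_self ξ),
    hbound (-q) (-p) (neg_le_neg hpq) fun ξ hξ => ?_⟩
  rw [abs_of_nonpos (by linarith [hξ.2])]
  linarith [hξ.2]

end OscillatoryIntegral

open OscillatoryIntegral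

/-- Van der Corput estimate for the oscillatory integral
`I_φ(x) = ∫_ℝ exp(i(b ξ⁴ + a ξ² + x ξ)) dξ` (as an improper integral):
there exists `C > 0`, independent of `a` and `b ≠ 0`, such that the improper integral
converges to a limit `L` with `|L| ≤ C |b|^{-1/4}`. -/
theorem oscillatory_integral_bound :
    ∃ C > 0, ∀ a b : ℝ, b ≠ 0 → ∀ x : ℝ, ∃ L : ℂ,
      Tendsto (fun R : ℝ =>
          ∫ ξ in (-R)..R, Complex.exp (Complex.I * ((b * ξ ^ 4 + a * ξ ^ 2 + x * ξ : ℝ) : ℂ)))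
        atTop (𝓝 L) ∧
      ‖L‖ ≤ C * |b| ^ (-(1 : ℝ) / 4) := by
  refine ⟨46, by norm_num, fun a b hb x => ?_⟩
  obtain ⟨L, hL⟩ := exists_tendsto_integral_neg_of_forall_norm_integral_le (by fun_prop)
    (norm_integral_exp_quartic_tail a x hb)
  refine ⟨L, hL, le_of_tendsto hL.norm (eventually_atTop.2 ⟨0, fun R hR => ?_⟩)⟩
  have hμ : 0 < |b| ^ (1 / 4 : ℝ) := by positivity
  have hμ4 : (|b| ^ (1 / 4 : ℝ)) ^ 4 = |b| := by
    rw [← Real.rpow_natCast, ← Real.rpow_mul (abs_nonneg b)]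
    norm_num
  calc _ ≤ (3 * 2 ^ 4 - 2) / |b| ^ (1 / 4 : ℝ) :=
        norm_integral_exp_le_of_le_abs_iteratedDeriv (by norm_num) (by linarith) (by fun_prop) hμ
          fun ξ _ => by
            rw [iteratedDeriv_four_quartic, hμ4, abs_mul]
            exact le_mul_of_one_le_left (abs_nonneg b) (by norm_num)
    _ = 46 * |b| ^ (-(1 : ℝ) / 4) := by
        rw [neg_div, Real.rpow_neg (abs_nonneg b), div_eq_mul_inv]
        norm_num
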